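/- The k-th primorial p_k# = ∏_{j=1}^k p_j satisfies p_k# = e^{(1+o(1)) k ln k}; equivalently, ln(p_k#)/(k ln k) → 1 as k → ∞. -/

import Mathlib

/-!
Since `p_j ≥ j`, the primorial `p_k#` is at least `k!`, and Stirling gives
`log k! ≥ k log k - k`. In the other direction `p_k# ≤ p_k^k`, and Chebyshev's lower bound
`π(x) ≥ (x log 2 - log (x + 1)) / log x` shows `π(x) ≥ x^a` for every `a < 1` and large `x`;
at `x = p_k`, where `π(x) = k`, this reads `a log p_k ≤ log k`.
-/

open Filter Real Asymptotics Finset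
open scoped Nat

theorem isLittleO_rpow_mul_log_add_log_add_one {a : ℝ} (ha : a < 1) :
    (fun x : ℝ => x ^ a * log x + log (x + 1)) =o[atTop] id := by
  have hpow : (fun x : ℝ => x ^ a * log x) =o[atTop] id := by
    refine ((isBigO_refl (fun x : ℝ => x ^ a) atTop).mul_isLittleO
      (isLittleO_log_rpow_atTop (sub_pos.2 ha))).congr' .rfl ?_
    filter_upwards [eventually_gt_atTop 0] with x hx
    rw [← rpow_add hx, add_sub_cancel, rpow_one, id]
  have hlog : (fun x : ℝ => log (x + 1)) =o[atTop] id :=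
    (isLittleO_log_id_atTop.comp_tendsto (tendsto_atTop_add_const_right _ 1 tendsto_id)).trans_isBigO
      ((isBigO_refl id atTop).add (isLittleO_const_id_atTop 1).isBigO)
  exact hpow.add hlog

theorem eventually_rpow_le_primeCounting {a : ℝ} (ha : a < 1) :
    ∀ᶠ n : ℕ in atTop, (n : ℝ) ^ a ≤ Nat.primeCounting n := by
  have h := ((isLittleO_rpow_mul_log_add_log_add_one ha).bound (log_pos one_lt_two)).natCast_atTop
  filter_upwards [h, eventually_gt_atTop 1] with n hn hn1
  have hlog : 0 < log n := log_pos (by exact_mod_cast hn1)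
  have hnonneg : 0 ≤ (n : ℝ) ^ a * log n + log (n + 1) :=
    add_nonneg (mul_nonneg (by positivity) hlog.le) (log_nonneg (by simp))
  rw [norm_of_nonneg hnonneg, id, norm_natCast] at hn
  refine le_trans ?_ (Chebyshev.pi_ge n)
  rw [le_div_iff₀ hlog]
  linarith

theorem primeCounting_nth_eq (k : ℕ) : Nat.primeCounting (Nat.nth Nat.Prime k) = k + 1 := by
  rw [Nat.primeCounting_eq_primeCounting'_succ, Nat.primeCounting', Nat.count_succ,
    ← Nat.primeCounting', Nat.primeCounting'_nth_eq, if_pos (Nat.prime_nth_prime k)]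

theorem eventually_nth_prime_rpow_le {a : ℝ} (ha : a < 1) :
    ∀ᶠ k : ℕ in atTop, (Nat.nth Nat.Prime k : ℝ) ^ a ≤ k + 1 := by
  have htendsto : Tendsto (Nat.nth Nat.Prime) atTop atTop :=
    (Nat.nth_strictMono Nat.infinite_setOfPred_prime).tendsto_atTop
  filter_upwards [htendsto.eventually (eventually_rpow_le_primeCounting ha)] with k hk
  exact_mod_cast primeCounting_nth_eq k ▸ hk

theorem factorial_le_prod_nth_prime (k : ℕ) : k ! ≤ ∏ j ∈ range k, Nat.nth Nat.Prime j := by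
  rw [← prod_range_add_one_eq_factorial]
  exact prod_le_prod' fun j _ => by linarith [Nat.add_two_le_nth_prime j]

theorem prod_range_succ_nth_prime_le_pow (k : ℕ) :
    ∏ j ∈ range (k + 1), Nat.nth Nat.Prime j ≤ Nat.nth Nat.Prime k ^ (k + 1) := by
  simpa using prod_le_pow_card _ _ _ fun j hj =>
    Nat.nth_monotone Nat.infinite_setOfPred_prime (Nat.lt_succ_iff.1 (mem_range.1 hj))

theorem mul_log_sub_le_log_factorial (k : ℕ) : k * log k - k ≤ log (k ! : ℝ) := by
  rcases Nat.eq_zero_or_pos k with rfl | hk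
  · simp
  have hstirling := Stirling.le_log_factorial_stirling hk.ne'
  have : 0 ≤ log (k : ℝ) := log_natCast_nonneg k
  have : 0 ≤ log (2 * π) := log_nonneg (by linarith [pi_gt_three])
  linarith

theorem mul_log_sub_le_log_prod_nth_prime (k : ℕ) :
    k * log k - k ≤ log (∏ j ∈ range k, (Nat.nth Nat.Prime j : ℝ)) := by
  refine (mul_log_sub_le_log_factorial k).trans (log_le_log (by positivity) ?_)
  exact_mod_cast factorial_le_prod_nth_prime k

theorem eventually_mul_log_prod_nth_prime_le {a : ℝ} (ha0 : 0 < a) (ha1 : a < 1) :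
    ∀ᶠ k : ℕ in atTop, a * log (∏ j ∈ range k, (Nat.nth Nat.Prime j : ℝ)) ≤ k * log k := by
  filter_upwards [(tendsto_sub_atTop_nat 1).eventually (eventually_nth_prime_rpow_le ha1),
    eventually_ge_atTop 1] with k hk hk1
  obtain ⟨m, rfl⟩ : ∃ m, k = m + 1 := ⟨k - 1, by omega⟩
  rw [add_tsub_cancel_right] at hk
  have hp : 0 < (Nat.nth Nat.Prime m : ℝ) := by exact_mod_cast (Nat.prime_nth_prime m).pos
  have hprod : ∏ j ∈ range (m + 1), (Nat.nth Nat.Prime j : ℝ) ≤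
      (Nat.nth Nat.Prime m : ℝ) ^ (m + 1) := by
    exact_mod_cast prod_range_succ_nth_prime_le_pow m
  calc a * log (∏ j ∈ range (m + 1), (Nat.nth Nat.Prime j : ℝ))
      ≤ a * log ((Nat.nth Nat.Prime m : ℝ) ^ (m + 1)) := by
        gcongr
        exact prod_pos fun j _ => by exact_mod_cast (Nat.prime_nth_prime j).pos
    _ = (m + 1 : ℕ) * log ((Nat.nth Nat.Prime m : ℝ) ^ a) := by
        rw [log_pow, log_rpow hp]; ring
    _ ≤ (m + 1 : ℕ) * log (m + 1 : ℕ) := by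
        gcongr
        exact_mod_cast hk

/-- Asymptotic growth of primorials: `p_k# = e^{(1+o(1)) k ln k}`, i.e.
`ln(p_k#) / (k ln k) → 1` as `k → ∞`. -/
theorem primorial_asymptotics :
    Tendsto (fun k : ℕ =>
        Real.log (∏ j ∈ Finset.range k, (Nat.nth Nat.Prime j : ℝ)) /
          ((k : ℝ) * Real.log k))
      atTop (nhds 1) := by
  have hlog : Tendsto (fun k : ℕ => log k) atTop atTop :=
    tendsto_log_atTop.comp tendsto_natCast_atTop_atTop
  have hpos : ∀ᶠ k : ℕ in atTop, 0 < (k : ℝ) * log k := by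
    filter_upwards [eventually_gt_atTop 0, hlog.eventually_gt_atTop 0] with k hk hlogk
    positivity
  rw [tendsto_order]
  refine ⟨fun b hb => ?_, fun b hb => ?_⟩
  · have hlower : Tendsto (fun k : ℕ => 1 - (log k)⁻¹) atTop (nhds 1) := by
      simpa using (tendsto_inv_atTop_zero.comp hlog).const_sub 1
    filter_upwards [hlower.eventually (lt_mem_nhds hb), hlog.eventually_gt_atTop 0, hpos]
      with k hbk hlogk hk
    refine hbk.trans_le ((le_div_iff₀ hk).2 ?_)
    calc (1 - (log k)⁻¹) * (k * log k) = k * log k - k := by field_simp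
      _ ≤ _ := mul_log_sub_le_log_prod_nth_prime k
  · obtain ⟨a, hba, ha1⟩ := exists_between (inv_lt_one_of_one_lt₀ hb)
    have ha0 : 0 < a := (inv_pos.2 (zero_lt_one.trans hb)).trans hba
    rw [inv_lt_iff_one_lt_mul₀ (zero_lt_one.trans hb)] at hba
    filter_upwards [eventually_mul_log_prod_nth_prime_le ha0 ha1, hpos] with k hup hk
    rw [div_lt_iff₀ hk]
    nlinarith
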